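/- The linear interior correctors satisfy the two-scale recursion. Let m ≥ 3, assume A = (a_{ij}) satisfies (L1), (L2) and (L3), and let (ā_{i_1…i_l}, χ^{i_1…i_l}), 2 ≤ l ≤ m, be constants and ℤⁿ-periodic C² functions satisfying the recursion a_{ij}(y) D_{ij}χ^{i_1…i_l} + 2 a_{i_l j}(y) D_j χ^{i_1…i_{l−1}} + a_{i_{l−1} i_l}(y) χ^{i_1…i_{l−2}} = ā_{i_1…i_l} in ℝⁿ (with χ ≡ 1, χ^i ≡ 0). Let Ω ⊂ ℝⁿ be open and let ψ_0, ψ_1, …, ψ_m : Ω → ℝ with ψ_k of class C^{m−k+2} and satisfying, for 1 ≤ k ≤ m−2, ā_{ij} D_{ij}ψ_k = − Σ_{l=3}^{k+2} ā_{i_1…i_l} D_{i_1…i_l} ψ_{k−l+2} in Ω (where ψ_j with negative index is interpreted as 0). Define for 1 ≤ k ≤ m: w_k(y,x) = Σ_{l=2}^{k} χ^{i_1…i_l}(y) D_{x_{i_1}…x_{i_l}} ψ_{k−l}(x) + ψ_k(x). Then for each 3 ≤ k ≤ m and all (y,x) ∈ ℝⁿ × Ω: a_{ij}(y) D_{y_i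 y_j} w_k(y,x) + 2 a_{ij}(y) D_{x_i y_j} w_{k−1}(y,x) + a_{ij}(y) D_{x_i x_j} w_{k−2}(y,x) = 0. -/

import Mathlib

open scoped Matrix.Norms.L2Operator
open Set

noncomputable section

/-- Points of `ℝⁿ` (with the Euclidean norm). -/
abbrev En (n : ℕ) := EuclideanSpace ℝ (Fin n)

/-- Translation of a point of `ℝⁿ` by an integer vector `k ∈ ℤⁿ`. -/
def latticeShift {n : ℕ} (y : En n) (k : Fin n → ℤ) : En n :=
  y + (WithLp.equiv 2 (Fin n → ℝ)).symm (fun i => (k i : ℝ))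

/-- `ℤⁿ`-periodicity of a scalar function on `ℝⁿ`. -/
def ZPeriodic {n : ℕ} (w : En n → ℝ) : Prop :=
  ∀ (y : En n) (k : Fin n → ℤ), w (latticeShift y k) = w y

/-- First partial derivative `D_i u (y)`. -/
def pd1 {n : ℕ} (u : En n → ℝ) (i : Fin n) (y : En n) : ℝ :=
  fderiv ℝ u y (EuclideanSpace.single i 1)

/-- Second partial derivative `D_{ij} u (y)`. -/
def pd2 {n : ℕ} (u : En n → ℝ) (i j : Fin n) (y : En n) : ℝ :=
  iteratedFDeriv ℝ 2 u y ![EuclideanSpace.single i 1, EuclideanSpace.single j 1]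

/-- Symmetry of the coefficient matrix `A(y) = (a_{ij}(y))`. -/
def CoeffSymm {n : ℕ} (A : En n → Matrix (Fin n) (Fin n) ℝ) : Prop :=
  ∀ y : En n, (A y).IsSymm

/-- (L1) `ℤⁿ`-periodicity of the coefficients. -/
def CoeffPeriodic {n : ℕ} (A : En n → Matrix (Fin n) (Fin n) ℝ) : Prop :=
  ∀ (y : En n) (k : Fin n → ℤ), A (latticeShift y k) = A y

/-- (L2) uniform ellipticity: `λ|ξ|² ≤ a_{ij}(y) ξ_i ξ_j ≤ Λ|ξ|²`. -/
def CoeffElliptic {n : ℕ} (lam Lam : ℝ) (A : En n → Matrix (Fin n) (Fin n) ℝ) : Prop :=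
  ∀ (y ξ : En n),
    lam * ‖ξ‖ ^ 2 ≤ ∑ i, ∑ j, A y i j * ξ i * ξ j ∧
      ∑ i, ∑ j, A y i j * ξ i * ξ j ≤ Lam * ‖ξ‖ ^ 2

/-- (L3) each entry of `A` is bounded by `σ` and `α`-Hölder continuous with constant `σ`,
i.e. `‖A‖_{C^{0,α}(ℝⁿ)} ≤ σ`. -/
def CoeffHolder {n : ℕ} (α σ : ℝ) (A : En n → Matrix (Fin n) (Fin n) ℝ) : Prop :=
  ∀ i j : Fin n, (∀ y : En n, |A y i j| ≤ σ) ∧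
    ∀ y z : En n, |A y i j - A z i j| ≤ σ * ‖y - z‖ ^ α

/-- Boundedness of a scalar function on `ℝⁿ`. -/
def IsBoundedFn {n : ℕ} (w : En n → ℝ) : Prop := ∃ K : ℝ, ∀ y : En n, |w y| ≤ K

/-- `‖w‖_{C^{2,α}(ℝⁿ)} ≤ C`: `w` is `C²`, `w`, `Dw`, `D²w` are bounded by `C` and `D²w` is
`α`-Hölder continuous with constant `C`. -/
def C2HolderBound {n : ℕ} (α C : ℝ) (w : En n → ℝ) : Prop :=
  ContDiff ℝ 2 w ∧ (∀ y : En n, |w y| ≤ C) ∧ (∀ y : En n, ‖fderiv ℝ w y‖ ≤ C) ∧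
    (∀ y : En n, ‖iteratedFDeriv ℝ 2 w y‖ ≤ C) ∧
    ∀ y z : En n, ‖iteratedFDeriv ℝ 2 w y - iteratedFDeriv ℝ 2 w z‖ ≤ C * ‖y - z‖ ^ α

/-- Membership in `C^{2,α}(ℝⁿ)`. -/
def MemC2Holder {n : ℕ} (α : ℝ) (w : En n → ℝ) : Prop := ∃ C : ℝ, C2HolderBound α C w

/-- `w` is a bounded `ℤⁿ`-periodic `C²` solution of the cell problem
`a_{ij}(y) D_{ij} w + a_{ij}(y) M_{ij} = γ` in `ℝⁿ`. -/
def CellSol {n : ℕ} (A : En n → Matrix (Fin n) (Fin n) ℝ) (M : Matrix (Fin n) (Fin n) ℝ)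
    (γ : ℝ) (w : En n → ℝ) : Prop :=
  IsBoundedFn w ∧ ZPeriodic w ∧ ContDiff ℝ 2 w ∧
    ∀ y : En n, (∑ i, ∑ j, A y i j * pd2 w i j y) + (∑ i, ∑ j, A y i j * M i j) = γ

/-- Iterated partial derivative `D_{i₁ … i_k} u (x)` along a list of coordinate directions. -/
def pdI {n : ℕ} (u : En n → ℝ) (l : List (Fin n)) (x : En n) : ℝ :=
  iteratedFDeriv ℝ l.length u x (fun j => EuclideanSpace.single (l.get j) 1)

/-- Mixed partial derivative `D_{x_i y_j} w (y,x)` of a function of two `ℝⁿ`-variables. -/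
def pdMix {n : ℕ} (w : En n → En n → ℝ) (i j : Fin n) (y x : En n) : ℝ :=
  fderiv ℝ (fun x' => fderiv ℝ (fun y' => w y' x') y (EuclideanSpace.single j 1)) x
    (EuclideanSpace.single i 1)

/-!
Write `w_k(y,x) = Σ_{|v| ≤ k} χ^v(y) D^v ψ_{k-|v|}(x)`, a sum over all words `v` of length at most
`k`. In the operator, the `y`-derivatives fall on the correctors and the `x`-derivatives on the
profiles; by the symmetry of the `x`-derivatives every term can be written with `D^{wpq} ψ`, where
the last two letters `p q` are those differentiated. Collecting the coefficient of
`D^{wpq} ψ_{k-2-|w|}` gives exactly the left-hand side of the cell recursion for `χ^{wpq}`, so the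
operator equals `Σ_{l=2}^{k} ā_v D^v ψ_{k-l}`, which is zero by the equation for `ψ_{k-2}`.
-/

section PartialDerivatives

variable {n : ℕ} {u : En n → ℝ} {x : En n}

theorem pdI_nil (u : En n → ℝ) (x : En n) : pdI u [] x = u x := by
  simp [pdI]

theorem pdI_singleton (u : En n → ℝ) (i : Fin n) (x : En n) : pdI u [i] x = pd1 u i x := by
  simp [pdI, pd1]

theorem pdI_pair (u : En n → ℝ) (i j : Fin n) (x : En n) : pdI u [i, j] x = pd2 u i j x := by
  rw [pd2, pdI]
  congr 1
  funext t
  fin_cases t <;> rfl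

theorem pd1_const (c : ℝ) (i : Fin n) (x : En n) : pd1 (fun _ => c) i x = 0 := by
  simp [pd1]

theorem pd2_const (c : ℝ) (i j : Fin n) (x : En n) : pd2 (fun _ => c) i j x = 0 := by
  simp [pd2, iteratedFDeriv_const_of_ne]

theorem contDiffAt_pdI {N d : ℕ} {l : List (Fin n)} (hu : ContDiffAt ℝ N u x)
    (h : d + l.length ≤ N) : ContDiffAt ℝ d (pdI u l) x :=
  (ContinuousMultilinearMap.apply ℝ (fun _ : Fin l.length => En n) ℝ _).contDiff.contDiffAt.comp
    x (hu.iteratedFDeriv_right (by exact_mod_cast h))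

theorem pdI_cons {N : ℕ} {l : List (Fin n)} (hu : ContDiffAt ℝ N u x) (h : l.length < N)
    (i : Fin n) : pdI u (i :: l) x = pd1 (pdI u l) i x := by
  unfold pd1 pdI
  rw [fderiv_continuousMultilinear_apply_const_apply
    (hu.differentiableAt_iteratedFDeriv (by exact_mod_cast h))]
  exact iteratedFDeriv_succ_apply_left _

theorem pd2_comm (hu : ContDiffAt ℝ 2 u x) (i j : Fin n) : pd2 u i j x = pd2 u j i x := by
  simp only [pd2, iteratedFDeriv_two_apply, Matrix.cons_val_zero, Matrix.cons_val_one]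
  exact hu.isSymmSndFDerivAt (by simp) _ _

theorem pdI_pdI {N : ℕ} {l : List (Fin n)} (l' : List (Fin n)) (hu : ContDiffAt ℝ N u x)
    (h : l'.length + l.length ≤ N) : pdI (pdI u l) l' x = pdI u (l' ++ l) x := by
  induction l' generalizing x with
  | nil => exact pdI_nil _ _
  | cons a l' ih =>
    simp only [List.length_cons] at h
    have hnear : pdI (pdI u l) l' =ᶠ[nhds x] pdI u (l' ++ l) :=
      (hu.eventually (by simp)).mono fun z hz => ih hz (by omega)
    rw [pdI_cons (N := N - l.length) (contDiffAt_pdI hu (by omega)) (by omega), pd1,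
      hnear.fderiv_eq, List.cons_append, pdI_cons hu (by simp; omega), pd1]

theorem pdI_perm {N : ℕ} {l l' : List (Fin n)} (hl : l.Perm l') (hu : ContDiffAt ℝ N u x)
    (h : l.length ≤ N) : pdI u l x = pdI u l' x := by
  induction hl generalizing x with
  | nil => rfl
  | cons a hl ih =>
    simp only [List.length_cons] at h
    have hnear : pdI u _ =ᶠ[nhds x] pdI u _ :=
      (hu.eventually (by simp)).mono fun z hz => ih hz (by omega)
    rw [pdI_cons hu (by omega), pd1, hnear.fderiv_eq,
      pdI_cons hu (by rw [← hl.length_eq]; omega), pd1]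
  | swap a b l =>
    simp only [List.length_cons] at h
    have hpair (c d : Fin n) : pdI u (c :: d :: l) x = pd2 (pdI u l) c d x := by
      rw [← pdI_pair, pdI_pdI _ hu (by simp; omega)]
      rfl
    rw [hpair, hpair, pd2_comm (contDiffAt_pdI (d := 2) hu (by omega))]
  | trans h₁₂ _ ih₁ ih₂ => rw [ih₁ hu h, ih₂ hu (by rw [← h₁₂.length_eq]; exact h)]

theorem pdI_sum {ι : Type*} (s : Finset ι) {g : ι → En n → ℝ} {l : List (Fin n)}
    (hg : ∀ a ∈ s, ContDiffAt ℝ l.length (g a) x) :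
    pdI (fun z => ∑ a ∈ s, g a z) l x = ∑ a ∈ s, pdI (g a) l x := by
  simp only [pdI, iteratedFDeriv_fun_sum_apply hg, sum_apply]

theorem pdI_const_mul (c : ℝ) {l : List (Fin n)} (hu : ContDiffAt ℝ l.length u x) :
    pdI (fun z => c * u z) l x = c * pdI u l x := by
  simp only [pdI, ← smul_eq_mul, iteratedFDeriv_const_smul_apply' hu, smul_apply]

theorem pdI_sum_sum_const_mul {ι : Type*} {κ : ι → Type*} [∀ a, Fintype (κ a)] (s : Finset ι)
    (c : ∀ a, κ a → ℝ) {g : ∀ a, κ a → En n → ℝ} {l : List (Fin n)}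
    (hg : ∀ a ∈ s, ∀ b, ContDiffAt ℝ l.length (g a b) x) :
    pdI (fun z => ∑ a ∈ s, ∑ b, c a b * g a b z) l x = ∑ a ∈ s, ∑ b, c a b * pdI (g a b) l x := by
  have hterm : ∀ a ∈ s, ∀ b, ContDiffAt ℝ l.length (fun z => c a b * g a b z) x :=
    fun a ha b => contDiffAt_const.mul (hg a ha b)
  rw [pdI_sum s fun a ha => ContDiffAt.sum fun b _ => hterm a ha b]
  refine Finset.sum_congr rfl fun a ha => ?_
  rw [pdI_sum _ fun b _ => hterm a ha b]
  exact Finset.sum_congr rfl fun b _ => pdI_const_mul _ (hg a ha b)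

theorem pdI_sum_sum_mul_const {ι : Type*} {κ : ι → Type*} [∀ a, Fintype (κ a)] (s : Finset ι)
    (c : ∀ a, κ a → ℝ) {g : ∀ a, κ a → En n → ℝ} {l : List (Fin n)}
    (hg : ∀ a ∈ s, ∀ b, ContDiffAt ℝ l.length (g a b) x) :
    pdI (fun z => ∑ a ∈ s, ∑ b, g a b z * c a b) l x = ∑ a ∈ s, ∑ b, pdI (g a b) l x * c a b := by
  simp only [mul_comm _ (c _ _)]
  exact pdI_sum_sum_const_mul s c hg

end PartialDerivatives

section WordSum

variable {α M : Type*} [Fintype α] [AddCommMonoid M]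

theorem sum_ofFn_succ (s : ℕ) (F : List α → M) :
    ∑ v : Fin (s + 1) → α, F (List.ofFn v) = ∑ w : Fin s → α, ∑ q, F (List.ofFn w ++ [q]) := by
  rw [← (Fin.snocEquiv fun _ => α).sum_comp, Fintype.sum_prod_type, Finset.sum_comm]
  simp only [Fin.snocEquiv_apply, List.ofFn_succ', Fin.snoc_castSucc, Fin.snoc_last,
    List.concat_eq_append]

def wordSum (k : ℕ) (F : ℕ → List α → M) : M :=
  ∑ l ∈ Finset.range (k + 1), ∑ v : Fin l → α, F l (List.ofFn v)

theorem wordSum_succ (k : ℕ) (F : ℕ → List α → M) :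
    wordSum (k + 1) F = F 0 [] + wordSum k fun l w => ∑ q, F (l + 1) (w ++ [q]) := by
  rw [wordSum, Finset.sum_range_succ', add_comm]
  simp only [sum_ofFn_succ, Finset.univ_unique, List.ofFn_zero, Finset.sum_singleton, wordSum]

theorem wordSum_congr {k : ℕ} {F G : ℕ → List α → M}
    (h : ∀ l ≤ k, ∀ v : Fin l → α, F l (List.ofFn v) = G l (List.ofFn v)) :
    wordSum k F = wordSum k G :=
  Finset.sum_congr rfl fun l hl => Finset.sum_congr rfl fun v _ =>
    h l (Finset.mem_range_succ_iff.1 hl) v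

theorem wordSum_add (k : ℕ) (F G : ℕ → List α → M) :
    wordSum k F + wordSum k G = wordSum k fun l v => F l v + G l v := by
  simp only [wordSum, ← Finset.sum_add_distrib]

theorem sum_wordSum {ι : Type*} (s : Finset ι) (k : ℕ) (F : ι → ℕ → List α → M) :
    ∑ i ∈ s, wordSum k (F i) = wordSum k fun l v => ∑ i ∈ s, F i l v := by
  simp only [wordSum]
  rw [Finset.sum_comm]
  exact Finset.sum_congr rfl fun _ _ => Finset.sum_comm

theorem mul_wordSum {R : Type*} [NonUnitalNonAssocSemiring R] (c : R) (k : ℕ)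
    (F : ℕ → List α → R) : c * wordSum k F = wordSum k fun l v => c * F l v := by
  simp only [wordSum, Finset.mul_sum]

theorem sum_ofFn_add_two (s : ℕ) (F : List α → M) :
    ∑ v : Fin (s + 2) → α, F (List.ofFn v) =
      ∑ w : Fin s → α, ∑ p, ∑ q, F (List.ofFn w ++ [p, q]) := by
  rw [sum_ofFn_succ, sum_ofFn_succ s fun L => ∑ q, F (L ++ [q])]
  simp only [List.append_assoc, List.singleton_append]

theorem wordSum_append_pair (k : ℕ) (F : ℕ → List α → M) :
    (wordSum k fun l w => ∑ p, ∑ q, F (l + 2) (w ++ [p, q])) =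
      ∑ l ∈ Finset.Icc 2 (k + 2), ∑ v : Fin l → α, F l (List.ofFn v) := by
  rw [← Finset.Ico_add_one_right_eq_Icc, Finset.sum_Ico_eq_sum_range,
    show k + 2 + 1 - 2 = k + 1 by omega, wordSum]
  refine Finset.sum_congr rfl fun l _ => ?_
  rw [add_comm 2 l, sum_ofFn_add_two]

theorem sum_ofFn_two (F : List α → M) :
    ∑ v : Fin 2 → α, F (List.ofFn v) = ∑ p, ∑ q, F [p, q] := by
  rw [sum_ofFn_add_two]
  simp only [Finset.univ_unique, List.ofFn_zero, Finset.sum_singleton, List.nil_append]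

end WordSum

section InteriorCorrector

variable {n : ℕ} (χ : List (Fin n) → En n → ℝ) (ψ : ℕ → En n → ℝ)

/-- The paper's `w_k(y,x)`, as a sum over all words of length `≤ k`: under the conventions
`χ ≡ 1`, `χ^i ≡ 0` the words of length `0` and `1` contribute `ψ_k` and `0`
(`interiorCorrector_eq_sum_Icc_add`). -/
def interiorCorrector (k : ℕ) (y x : En n) : ℝ :=
  wordSum k fun l v => χ v y * pdI (ψ (k - l)) v x

variable {χ ψ}

theorem interiorCorrector_eq_sum_Icc_add (hχnil : ∀ y, χ [] y = 1)
    (hχone : ∀ i y, χ [i] y = 0) {k : ℕ} (hk : 1 ≤ k) (y x : En n) :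
    interiorCorrector χ ψ k y x =
      (∑ l ∈ Finset.Icc 2 k, ∑ v : Fin l → Fin n,
        χ (List.ofFn v) y * pdI (ψ (k - l)) (List.ofFn v) x) + ψ k x := by
  rw [interiorCorrector, wordSum, ← Finset.sum_range_add_sum_Ico _ (by omega : 2 ≤ k + 1),
    add_comm]
  simp [Finset.sum_range_succ, hχnil, hχone, pdI_nil, Finset.Ico_add_one_right_eq_Icc]

theorem pd2_interiorCorrector_fast {k : ℕ} {y : En n}
    (hχ : ∀ l : List (Fin n), l.length ≤ k → ContDiffAt ℝ 2 (χ l) y) (i j : Fin n) (x : En n) :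
    pd2 (fun y' => interiorCorrector χ ψ k y' x) i j y =
      wordSum k fun l v => pd2 (χ v) i j y * pdI (ψ (k - l)) v x := by
  simp only [← pdI_pair, interiorCorrector, wordSum]
  exact pdI_sum_sum_mul_const _ _ fun l hl v =>
    hχ _ (by simpa [Nat.lt_succ_iff] using hl)

theorem pdMix_interiorCorrector {k : ℕ} {y x : En n}
    (hχ : ∀ l : List (Fin n), l.length ≤ k → ContDiffAt ℝ 1 (χ l) y)
    (hψ : ∀ r ≤ k, ContDiffAt ℝ (k - r + 1 : ℕ) (ψ r) x) (i j : Fin n) :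
    pdMix (interiorCorrector χ ψ k) i j y x =
      wordSum k fun l v => pd1 (χ v) j y * pdI (ψ (k - l)) (v ++ [i]) x := by
  have hfast (x' : En n) : pd1 (fun y' => interiorCorrector χ ψ k y' x') j y =
      wordSum k fun l v => pd1 (χ v) j y * pdI (ψ (k - l)) v x' := by
    simp only [← pdI_singleton, interiorCorrector, wordSum]
    exact pdI_sum_sum_mul_const _ _ fun l hl v =>
      hχ _ (by simpa [Nat.lt_succ_iff] using hl)
  change pd1 (fun x' => pd1 (fun y' => interiorCorrector χ ψ k y' x') j y) i x = _
  simp only [hfast, ← pdI_singleton, wordSum]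
  have hl : ∀ l ∈ Finset.range (k + 1), ContDiffAt ℝ (l + 1 : ℕ) (ψ (k - l)) x := fun l hl => by
    simpa [Nat.sub_sub_self (Finset.mem_range_succ_iff.1 hl)] using hψ (k - l) (Nat.sub_le _ _)
  rw [pdI_sum_sum_const_mul _ _ fun l hl' v => contDiffAt_pdI (hl l hl') (by simp [add_comm])]
  refine Finset.sum_congr rfl fun l hl' => Finset.sum_congr rfl fun v _ => ?_
  rw [pdI_pdI _ (hl l hl') (by simp [add_comm]),
    pdI_perm List.perm_append_comm (hl l hl') (by simp)]

theorem pd2_interiorCorrector_slow {k : ℕ} {x : En n}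
    (hψ : ∀ r ≤ k, ContDiffAt ℝ (k - r + 2 : ℕ) (ψ r) x) (i j : Fin n) (y : En n) :
    pd2 (fun x' => interiorCorrector χ ψ k y x') i j x =
      wordSum k fun l v => χ v y * pdI (ψ (k - l)) (v ++ [i, j]) x := by
  have hl : ∀ l ∈ Finset.range (k + 1), ContDiffAt ℝ (l + 2 : ℕ) (ψ (k - l)) x := fun l hl => by
    simpa [Nat.sub_sub_self (Finset.mem_range_succ_iff.1 hl)] using hψ (k - l) (Nat.sub_le _ _)
  simp only [← pdI_pair, interiorCorrector, wordSum]
  rw [pdI_sum_sum_const_mul _ _ fun l hl' v => contDiffAt_pdI (hl l hl') (by simp [add_comm])]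
  refine Finset.sum_congr rfl fun l hl' => Finset.sum_congr rfl fun v _ => ?_
  rw [pdI_pdI _ (hl l hl') (by simp; omega),
    pdI_perm List.perm_append_comm (hl l hl') (by simp)]

theorem twoScaleOperator_interiorCorrector_eq_sum_abar (k : ℕ) (a : Matrix (Fin n) (Fin n) ℝ)
    (abar : List (Fin n) → ℝ) {y x : En n}
    (hχnil : ∀ y, χ [] y = 1) (hχone : ∀ i y, χ [i] y = 0)
    (hχ : ∀ l : List (Fin n), l.length ≤ k + 2 → ContDiffAt ℝ 2 (χ l) y)
    (hψ : ∀ r ≤ k + 1, ContDiffAt ℝ (k + 2 - r : ℕ) (ψ r) x)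
    (hrec : ∀ (w : List (Fin n)) (p q : Fin n), w.length ≤ k →
      (∑ i, ∑ j, a i j * pd2 (χ (w ++ [p, q])) i j y)
        + 2 * (∑ j, a q j * pd1 (χ (w ++ [p])) j y)
        + a p q * χ w y = abar (w ++ [p, q])) :
    (∑ i, ∑ j, a i j * pd2 (fun y' => interiorCorrector χ ψ (k + 2) y' x) i j y)
      + 2 * (∑ i, ∑ j, a i j * pdMix (interiorCorrector χ ψ (k + 1)) i j y x)
      + (∑ i, ∑ j, a i j * pd2 (fun x' => interiorCorrector χ ψ k y x') i j x) =
      ∑ l ∈ Finset.Icc 2 (k + 2), ∑ v : Fin l → Fin n,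
        abar (List.ofFn v) * pdI (ψ (k + 2 - l)) (List.ofFn v) x := by
  have hψ₁ : ∀ r ≤ k + 1, ContDiffAt ℝ (k + 1 - r + 1 : ℕ) (ψ r) x := fun r hr => by
    rw [show k + 1 - r + 1 = k + 2 - r by omega]; exact hψ r hr
  have hψ₂ : ∀ r ≤ k, ContDiffAt ℝ (k - r + 2 : ℕ) (ψ r) x := fun r hr => by
    rw [show k - r + 2 = k + 2 - r by omega]; exact hψ r (by omega)
  simp only [pd2_interiorCorrector_fast hχ, pd2_interiorCorrector_slow hψ₂,
    pdMix_interiorCorrector (fun l hl => (hχ l (by omega)).of_le (by norm_num)) hψ₁,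
    mul_wordSum, sum_wordSum]
  rw [wordSum_succ (k + 1), wordSum_succ k, wordSum_succ k]
  have hnil : χ [] = fun _ => 1 := funext hχnil
  have hone (i : Fin n) : χ [i] = fun _ => 0 := funext (hχone i)
  simp only [List.nil_append, hnil, hone, pd1_const, pd2_const, zero_mul, mul_zero,
    Finset.sum_const_zero, zero_add]
  rw [wordSum_add, wordSum_add,
    ← wordSum_append_pair k fun l v => abar v * pdI (ψ (k + 2 - l)) v x]
  refine wordSum_congr fun l hl v => ?_
  simp only [← hrec (List.ofFn v) _ _ (by simpa using hl), add_mul, Finset.sum_add_distrib,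
    Finset.sum_mul, Finset.mul_sum, mul_assoc, List.append_assoc, List.cons_append,
    List.nil_append, Nat.add_sub_add_right]

end InteriorCorrector

theorem linear_interior_correctors_recursion_general
    (n : ℕ) (m : ℕ)
    (A : En n → Matrix (Fin n) (Fin n) ℝ)
    (abar : List (Fin n) → ℝ) (χ : List (Fin n) → En n → ℝ)
    (hχnil : ∀ y : En n, χ [] y = 1)
    (hχone : ∀ (i : Fin n) (y : En n), χ [i] y = 0)
    (hχreg : ∀ l : List (Fin n), 2 ≤ l.length → l.length ≤ m →
      ZPeriodic (χ l) ∧ ContDiff ℝ 2 (χ l))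
    (hrec : ∀ (l : List (Fin n)) (p q : Fin n), l.length + 2 ≤ m →
      ∀ y : En n,
        (∑ i, ∑ j, A y i j * pd2 (χ (l ++ [p, q])) i j y)
          + 2 * (∑ j, A y q j * pd1 (χ (l ++ [p])) j y)
          + A y p q * χ l y = abar (l ++ [p, q]))
    (Ω : Set (En n)) (hΩ : IsOpen Ω)
    (ψ : ℕ → En n → ℝ)
    (hψreg : ∀ k : ℕ, k ≤ m → ContDiffOn ℝ (m - k + 2) (ψ k) Ω)
    (hψpde : ∀ k : ℕ, 1 ≤ k → k ≤ m - 2 → ∀ x ∈ Ω,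
      ∑ i, ∑ j, abar [i, j] * pd2 (ψ k) i j x =
        - ∑ l ∈ Finset.Icc 3 (k + 2), ∑ v : Fin l → Fin n,
            abar (List.ofFn v) * pdI (ψ (k + 2 - l)) (List.ofFn v) x)
    (W : ℕ → En n → En n → ℝ)
    (hW : ∀ (k : ℕ) (y x : En n),
      W k y x =
        (∑ l ∈ Finset.Icc 2 k, ∑ v : Fin l → Fin n,
          χ (List.ofFn v) y * pdI (ψ (k - l)) (List.ofFn v) x) + ψ k x) :
    ∀ k : ℕ, 3 ≤ k → k ≤ m → ∀ (y : En n), ∀ x ∈ Ω,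
      (∑ i, ∑ j, A y i j * pd2 (fun y' => W k y' x) i j y)
        + 2 * (∑ i, ∑ j, A y i j * pdMix (W (k - 1)) i j y x)
        + (∑ i, ∑ j, A y i j * pd2 (fun x' => W (k - 2) y x') i j x) = 0 := by
  intro k hk3 hkm y x hx
  have hχ : ∀ l : List (Fin n), l.length ≤ m → ContDiff ℝ 2 (χ l) := by
    rintro (_ | ⟨i, _ | ⟨j, l⟩⟩) hl
    · exact funext hχnil ▸ contDiff_const
    · exact funext (hχone i) ▸ contDiff_const
    · exact (hχreg _ (by simp) hl).2
  have hψ : ∀ r ≤ m, ContDiffAt ℝ (m - r + 2 : ℕ) (ψ r) x := fun r hr => by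
    exact_mod_cast (hψreg r hr).contDiffAt (hΩ.mem_nhds hx)
  have hWcorr : ∀ k, 1 ≤ k → W k = interiorCorrector χ ψ k := fun k hk =>
    funext₂ fun y x => (hW k y x).trans (interiorCorrector_eq_sum_Icc_add hχnil hχone hk y x).symm
  obtain ⟨K, rfl⟩ : ∃ K, k = K + 1 + 2 := ⟨k - 3, by omega⟩
  have hcompat : ∑ l ∈ Finset.Icc 2 (K + 1 + 2), ∑ v : Fin l → Fin n,
      abar (List.ofFn v) * pdI (ψ (K + 1 + 2 - l)) (List.ofFn v) x = 0 := by
    rw [← Finset.insert_Icc_add_one_left_eq_Icc (by omega), Finset.sum_insert (by simp),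
      Nat.add_sub_cancel, sum_ofFn_two fun v => abar v * pdI (ψ (K + 1)) v x]
    simp only [pdI_pair, hψpde (K + 1) (by omega) (by omega) x hx]
    exact neg_add_cancel _
  rw [← hcompat, show K + 1 + 2 - 1 = K + 1 + 1 by omega, show K + 1 + 2 - 2 = K + 1 by omega,
    hWcorr _ (by omega), hWcorr _ (by omega), hWcorr _ (by omega)]
  exact twoScaleOperator_interiorCorrector_eq_sum_abar (K + 1) (A y) abar hχnil hχone
    (fun l hl => (hχ l (by omega)).contDiffAt)
    (fun r hr => (hψ r (by omega)).of_le (by exact_mod_cast (by omega : K + 3 - r ≤ m - r + 2)))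
    (fun w p q hw => hrec w p q (by omega) y)

/-- **The linear interior correctors satisfy the two-scale recursion.** With correctors
`χ^{i₁…i_l}` solving the fast-variable recursion and slow-variable profiles `ψ_k` solving the
compatibility equations, the functions
`w_k(y,x) = Σ_{l=2}^{k} χ^{i₁…i_l}(y) D_{x_{i₁}…x_{i_l}} ψ_{k-l}(x) + ψ_k(x)` satisfy
`a_{ij} D_{y_i y_j} w_k + 2 a_{ij} D_{x_i y_j} w_{k-1} + a_{ij} D_{x_i x_j} w_{k-2} = 0`
on `ℝⁿ × Ω` for `3 ≤ k ≤ m`. -/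
theorem linear_interior_correctors_recursion
    (n : ℕ) (hn : 1 ≤ n) (m : ℕ) (hm : 3 ≤ m) (lam Lam σ α : ℝ)
    (hlam : 0 < lam) (hlamLam : lam ≤ Lam) (hσ : 0 < σ) (hα : α ∈ Set.Ioc (0:ℝ) 1)
    (A : En n → Matrix (Fin n) (Fin n) ℝ)
    (hAsymm : CoeffSymm A) (hAper : CoeffPeriodic A)
    (hAell : CoeffElliptic lam Lam A) (hAhold : CoeffHolder α σ A)
    (abar : List (Fin n) → ℝ) (χ : List (Fin n) → En n → ℝ)
    (hχnil : ∀ y : En n, χ [] y = 1)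
    (hχone : ∀ (i : Fin n) (y : En n), χ [i] y = 0)
    (hχreg : ∀ l : List (Fin n), 2 ≤ l.length → l.length ≤ m →
      ZPeriodic (χ l) ∧ ContDiff ℝ 2 (χ l))
    (hrec : ∀ (l : List (Fin n)) (p q : Fin n), l.length + 2 ≤ m →
      ∀ y : En n,
        (∑ i, ∑ j, A y i j * pd2 (χ (l ++ [p, q])) i j y)
          + 2 * (∑ j, A y q j * pd1 (χ (l ++ [p])) j y)
          + A y p q * χ l y = abar (l ++ [p, q]))
    (Ω : Set (En n)) (hΩ : IsOpen Ω)
    (ψ : ℕ → En n → ℝ)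
    (hψreg : ∀ k : ℕ, k ≤ m → ContDiffOn ℝ (m - k + 2) (ψ k) Ω)
    (hψpde : ∀ k : ℕ, 1 ≤ k → k ≤ m - 2 → ∀ x ∈ Ω,
      ∑ i, ∑ j, abar [i, j] * pd2 (ψ k) i j x =
        - ∑ l ∈ Finset.Icc 3 (k + 2), ∑ v : Fin l → Fin n,
            abar (List.ofFn v) * pdI (ψ (k + 2 - l)) (List.ofFn v) x)
    (W : ℕ → En n → En n → ℝ)
    (hW : ∀ (k : ℕ) (y x : En n),
      W k y x =
        (∑ l ∈ Finset.Icc 2 k, ∑ v : Fin l → Fin n,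
          χ (List.ofFn v) y * pdI (ψ (k - l)) (List.ofFn v) x) + ψ k x) :
    ∀ k : ℕ, 3 ≤ k → k ≤ m → ∀ (y : En n), ∀ x ∈ Ω,
      (∑ i, ∑ j, A y i j * pd2 (fun y' => W k y' x) i j y)
        + 2 * (∑ i, ∑ j, A y i j * pdMix (W (k - 1)) i j y x)
        + (∑ i, ∑ j, A y i j * pd2 (fun x' => W (k - 2) y x') i j x) = 0 :=
  linear_interior_correctors_recursion_general n m A abar χ hχnil hχone hχreg hrec Ω hΩ ψ hψreg
    hψpde W hW
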